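/- The second derivative of f satisfies f″(r) ≤ 0 for every r ≥ 0; consequently f′ is nonincreasing and 0 ≤ f′(r) ≤ f′(0) = δ for every r ≥ 0, i.e. the supremum of f′ on [0,∞) equals δ. -/

import Mathlib

/-!
Write `c = 1 / (2β²)`, `Γ = ∫₀ γ̃` and `f'(r) = e^{-cΓ(r)} ∫_r^∞ s e^{cΓ(s)} ds`, so that
`f'' = -c γ̃ f' - r`. The drift factors as `γ̃(v) = v k(v)` with `k` antitone (a clamped linear
slope shifted by `Kσ`) and negative from `2R` on. Where `k(r) ≥ 0`, `f''(r) ≤ 0` is immediate.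
Where `k(r) < 0`, antitonicity gives `Γ(s) - Γ(r) ≤ k(r)(s² - r²)/2` for `s ≥ r`, so `f'(r)` is
dominated by a Gaussian tail integral equal to `1 / (-c k(r))`, i.e. `-c γ̃(r) f'(r) ≤ r`. The same
domination makes the tail integrals finite.
-/

open MeasureTheory Set Filter Real Topology

theorem hasDerivAt_integral_Ioi {g : ℝ → ℝ} {a r : ℝ} (hint : IntegrableOn g (Ioi a))
    (hg : ContinuousAt g r) (har : a < r) :
    HasDerivAt (fun x => ∫ s in Ioi x, g s) (-g r) r := by
  have hprim : HasDerivAt (fun x => (∫ s in Ioi a, g s) - ∫ s in a..x, g s) (-g r) r :=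
    (intervalIntegral.integral_hasDerivAt_right
      ((intervalIntegrable_iff_integrableOn_Ioc_of_le har.le).2
        (hint.mono_set Ioc_subset_Ioi_self))
      (AEStronglyMeasurable.stronglyMeasurableAtFilter_of_mem hint.1 (Ioi_mem_nhds har))
      hg).const_sub _
  refine hprim.congr_of_eventuallyEq ?_
  filter_upwards [Ioi_mem_nhds har] with x hx
  rw [← intervalIntegral.integral_Ioi_sub_Ioi hint hx.le, sub_sub_cancel]

section GaussianTail

variable {a : ℝ}

theorem tendsto_exp_mul_sq_sub_atTop (ha : a < 0) (r : ℝ) :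
    Tendsto (fun x => exp (a * (x ^ 2 - r ^ 2))) atTop (𝓝 0) :=
  tendsto_exp_atBot.comp <| Tendsto.const_mul_atTop_of_neg ha <|
    tendsto_atTop_add_const_right _ _ (tendsto_pow_atTop two_ne_zero)

theorem hasDerivAt_exp_mul_sq_sub_div (ha : a ≠ 0) (r x : ℝ) :
    HasDerivAt (fun x => exp (a * (x ^ 2 - r ^ 2)) / (2 * a))
      (x * exp (a * (x ^ 2 - r ^ 2))) x := by
  have h := ((((hasDerivAt_pow 2 x).sub_const (r ^ 2)).const_mul a).exp).div_const (2 * a)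
  refine h.congr_deriv ?_
  field_simp
  ring

theorem integrableOn_Ioi_mul_exp_mul_sq_sub (ha : a < 0) {r : ℝ} (hr : 0 ≤ r) :
    IntegrableOn (fun x => x * exp (a * (x ^ 2 - r ^ 2))) (Ioi r) :=
  integrableOn_Ioi_deriv_of_nonneg' (fun x _ => hasDerivAt_exp_mul_sq_sub_div ha.ne r x)
    (fun _ hx => mul_nonneg (hr.trans hx.out.le) (exp_pos _).le)
    ((tendsto_exp_mul_sq_sub_atTop ha r).div_const _)

theorem integral_Ioi_mul_exp_mul_sq_sub (ha : a < 0) {r : ℝ} (hr : 0 ≤ r) :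
    ∫ x in Ioi r, x * exp (a * (x ^ 2 - r ^ 2)) = -1 / (2 * a) := by
  rw [integral_Ioi_of_hasDerivAt_of_nonneg' (fun x _ => hasDerivAt_exp_mul_sq_sub_div ha.ne r x)
    (fun _ hx => mul_nonneg (hr.trans hx.out.le) (exp_pos _).le)
    ((tendsto_exp_mul_sq_sub_atTop ha r).div_const _)]
  simp [neg_div]

end GaussianTail

noncomputable def weightedTail (c : ℝ) (Γ : ℝ → ℝ) (r : ℝ) : ℝ :=
  exp (-c * Γ r) * ∫ s in Ioi r, s * exp (c * Γ s)

section WeightedTail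

variable {c : ℝ} {Γ k : ℝ → ℝ}

theorem weightedTail_nonneg {r : ℝ} (hr : 0 ≤ r) : 0 ≤ weightedTail c Γ r :=
  mul_nonneg (exp_pos _).le <| setIntegral_nonneg measurableSet_Ioi fun _ hs =>
    mul_nonneg (hr.trans hs.out.le) (exp_pos _).le

theorem hasDerivAt_weightedTail {d a r : ℝ} (hΓ : HasDerivAt Γ d r)
    (hint : IntegrableOn (fun s => s * exp (c * Γ s)) (Ioi a)) (har : a < r) :
    HasDerivAt (weightedTail c Γ) (-(c * d) * weightedTail c Γ r - r) r := by
  have htail := hasDerivAt_integral_Ioi hint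
    (continuousAt_id.mul (hΓ.continuousAt.const_mul c).rexp) har
  refine (((hΓ.const_mul (-c)).exp).mul htail).congr_deriv ?_
  have hcancel : exp (-c * Γ r) * exp (c * Γ r) = 1 := by rw [← exp_add]; simp
  simp only [weightedTail]
  linear_combination (-r) * hcancel

theorem continuous_mul_exp_of_hasDerivAt {d : ℝ → ℝ} (hΓ : ∀ x, HasDerivAt Γ (d x) x) :
    Continuous fun s => s * exp (c * Γ s) :=
  continuous_id.mul ((continuous_iff_continuousAt.2 fun x => (hΓ x).continuousAt).const_mul c).rexp

theorem sub_le_of_hasDerivAt_mul_antitone (hΓ : ∀ x, HasDerivAt Γ (x * k x) x)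
    (hk : Antitone k) {r s : ℝ} (hr : 0 ≤ r) (hrs : r ≤ s) :
    Γ s - Γ r ≤ k r / 2 * (s ^ 2 - r ^ 2) := by
  have hderiv : ∀ x, HasDerivAt (fun x => Γ x - k r / 2 * x ^ 2) (x * (k x - k r)) x := fun x =>
    ((hΓ x).sub ((hasDerivAt_pow 2 x).const_mul (k r / 2))).congr_deriv (by ring)
  have hanti : AntitoneOn (fun x => Γ x - k r / 2 * x ^ 2) (Ici r) := by
    refine antitoneOn_of_hasDerivWithinAt_nonpos (convex_Ici r)
      (fun x _ => (hderiv x).continuousAt.continuousWithinAt)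
      (fun x _ => (hderiv x).hasDerivWithinAt) fun x hx => ?_
    rw [interior_Ici] at hx
    exact mul_nonpos_of_nonneg_of_nonpos (hr.trans hx.out.le) (sub_nonpos.2 (hk hx.out.le))
  have := hanti self_mem_Ici hrs hrs
  linarith

theorem exp_neg_mul_mul_mul_exp_le (hc : 0 ≤ c) (hΓ : ∀ x, HasDerivAt Γ (x * k x) x)
    (hk : Antitone k) {r s : ℝ} (hr : 0 ≤ r) (hrs : r ≤ s) :
    exp (-c * Γ r) * (s * exp (c * Γ s)) ≤ s * exp (c * (k r / 2) * (s ^ 2 - r ^ 2)) := by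
  rw [mul_left_comm, ← exp_add, mul_assoc]
  gcongr
  · linarith
  · linarith [mul_le_mul_of_nonneg_left (sub_le_of_hasDerivAt_mul_antitone hΓ hk hr hrs) hc]

theorem integrableOn_Ioi_mul_exp_of_neg (hc : 0 < c) (hΓ : ∀ x, HasDerivAt Γ (x * k x) x)
    (hk : Antitone k) {r : ℝ} (hr : 0 ≤ r) (hkr : k r < 0) :
    IntegrableOn (fun s => s * exp (c * Γ s)) (Ioi r) := by
  have hdom := integrableOn_Ioi_mul_exp_mul_sq_sub (a := c * (k r / 2))
    (mul_neg_of_pos_of_neg hc (by linarith)) hr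
  have : IntegrableOn (fun s => exp (-c * Γ r) * (s * exp (c * Γ s))) (Ioi r) := by
    refine hdom.mono' ((continuous_mul_exp_of_hasDerivAt hΓ).const_mul _).aestronglyMeasurable ?_
    refine ae_restrict_of_forall_mem measurableSet_Ioi fun s hs => ?_
    rw [Real.norm_of_nonneg (by have := hr.trans hs.out.le; positivity)]
    exact exp_neg_mul_mul_mul_exp_le hc.le hΓ hk hr hs.out.le
  refine IntegrableOn.congr_fun (this.const_mul (exp (c * Γ r))) (fun s _ => ?_) measurableSet_Ioi
  rw [← mul_assoc, ← exp_add]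
  simp

theorem integrableOn_Ioi_mul_exp (hc : 0 < c) (hΓ : ∀ x, HasDerivAt Γ (x * k x) x)
    (hk : Antitone k) {x₀ : ℝ} (hx₀ : k x₀ < 0) (a : ℝ) :
    IntegrableOn (fun s => s * exp (c * Γ s)) (Ioi a) := by
  set x := max x₀ (max 0 a)
  have hax : a ≤ x := (le_max_right 0 a).trans (le_max_right _ _)
  have hx : 0 ≤ x := (le_max_left 0 a).trans (le_max_right _ _)
  have hkx : k x < 0 := (hk (le_max_left _ _)).trans_lt hx₀
  rw [← Ioc_union_Ioi_eq_Ioi hax]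
  exact ((continuous_mul_exp_of_hasDerivAt hΓ).integrableOn_Icc.mono_set Ioc_subset_Icc_self).union
    (integrableOn_Ioi_mul_exp_of_neg hc hΓ hk hx hkx)

theorem neg_mul_mul_weightedTail_le_one (hc : 0 < c) (hΓ : ∀ x, HasDerivAt Γ (x * k x) x)
    (hk : Antitone k) {r : ℝ} (hr : 0 ≤ r) (hkr : k r < 0) :
    -(c * k r) * weightedTail c Γ r ≤ 1 := by
  have ha : c * (k r / 2) < 0 := mul_neg_of_pos_of_neg hc (by linarith)
  have hle : weightedTail c Γ r ≤ -1 / (2 * (c * (k r / 2))) := by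
    rw [weightedTail, ← integral_const_mul, ← integral_Ioi_mul_exp_mul_sq_sub ha hr]
    exact setIntegral_mono_on ((integrableOn_Ioi_mul_exp_of_neg hc hΓ hk hr hkr).const_mul _)
      (integrableOn_Ioi_mul_exp_mul_sq_sub ha hr) measurableSet_Ioi
      fun s hs => exp_neg_mul_mul_mul_exp_le hc.le hΓ hk hr hs.out.le
  calc -(c * k r) * weightedTail c Γ r ≤ -(c * k r) * (-1 / (2 * (c * (k r / 2)))) :=
        mul_le_mul_of_nonneg_left hle (by linarith)
    _ = 1 := by field_simp [hc.ne', hkr.ne]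

theorem neg_mul_mul_weightedTail_sub_nonpos (hc : 0 < c) (hΓ : ∀ x, HasDerivAt Γ (x * k x) x)
    (hk : Antitone k) {r : ℝ} (hr : 0 ≤ r) :
    -(c * (r * k r)) * weightedTail c Γ r - r ≤ 0 := by
  rcases le_or_gt 0 (k r) with hkr | hkr
  · have := mul_nonneg (mul_nonneg hc.le (mul_nonneg hr hkr))
      (weightedTail_nonneg (c := c) (Γ := Γ) hr)
    linarith
  · have := mul_le_mul_of_nonneg_left (neg_mul_mul_weightedTail_le_one hc hΓ hk hr hkr) hr
    linarith

theorem hasDerivAt_weightedTail_of_antitone (hc : 0 < c) (hΓ : ∀ x, HasDerivAt Γ (x * k x) x)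
    (hk : Antitone k) {x₀ : ℝ} (hx₀ : k x₀ < 0) (r : ℝ) :
    HasDerivAt (weightedTail c Γ) (-(c * (r * k r)) * weightedTail c Γ r - r) r :=
  hasDerivAt_weightedTail (hΓ r) (integrableOn_Ioi_mul_exp hc hΓ hk hx₀ (r - 1)) (by linarith)

theorem antitoneOn_weightedTail (hc : 0 < c) (hΓ : ∀ x, HasDerivAt Γ (x * k x) x)
    (hk : Antitone k) {x₀ : ℝ} (hx₀ : k x₀ < 0) :
    AntitoneOn (weightedTail c Γ) (Ici 0) := by
  have hderiv := hasDerivAt_weightedTail_of_antitone hc hΓ hk hx₀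
  refine antitoneOn_of_hasDerivWithinAt_nonpos (convex_Ici 0)
    (fun x _ => (hderiv x).continuousAt.continuousWithinAt)
    (fun x _ => (hderiv x).hasDerivWithinAt) fun x hx => ?_
  rw [interior_Ici] at hx
  exact neg_mul_mul_weightedTail_sub_nonpos hc hΓ hk hx.out.le

end WeightedTail

noncomputable def driftSlope (K₁ K₂ R r : ℝ) : ℝ :=
  max (-K₂) (min K₁ (-((K₁ + K₂) / R) * (r - R) + K₁))

section driftSlope

variable {K₁ K₂ R : ℝ}

theorem continuous_driftSlope : Continuous (driftSlope K₁ K₂ R) := by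
  unfold driftSlope; fun_prop

theorem antitone_driftSlope (hK : 0 ≤ K₁ + K₂) (hR : 0 < R) : Antitone (driftSlope K₁ K₂ R) := by
  have hlin : Antitone fun r => -((K₁ + K₂) / R) * (r - R) + K₁ := fun x y hxy => by
    have := div_nonneg hK hR.le
    simp only
    nlinarith
  exact antitone_const.max (antitone_const.min hlin)

theorem driftSlope_two_mul (hR : 0 < R) : driftSlope K₁ K₂ R (2 * R) = -K₂ := by
  have : -((K₁ + K₂) / R) * (2 * R - R) + K₁ = -K₂ := by field_simp; ring
  rw [driftSlope, this, max_eq_left (min_le_right _ _)]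

theorem ite_eq_mul_driftSlope (hK : 0 ≤ K₁ + K₂) (hR : 0 < R) (r : ℝ) :
    (if r ≤ R then K₁ * r
      else if r ≤ 2 * R then (-((K₁ + K₂) / R) * (r - R) + K₁) * r
      else -K₂ * r) = r * driftSlope K₁ K₂ R r := by
  set t := (K₁ + K₂) / R
  have ht : 0 ≤ t := div_nonneg hK hR.le
  have htR : t * R = K₁ + K₂ := div_mul_cancel₀ _ hR.ne'
  rw [driftSlope]
  split_ifs with h₁ h₂
  · rw [min_eq_left (by nlinarith), max_eq_right (by linarith), mul_comm]
  · rw [min_eq_right (by nlinarith), max_eq_right (by nlinarith), mul_comm]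
  · rw [min_eq_right (by nlinarith), max_eq_left (by nlinarith), mul_comm]

end driftSlope

theorem stmt3_general (β K₁ Kσ K₂ R : ℝ) (hβ : β ≠ 0) (hK₁ : 0 ≤ K₁) (hKσ : 0 < Kσ)
    (hK₂ : Kσ < K₂) (hR : 0 < R)
    (γ γt g : ℝ → ℝ) (δ : ℝ) (f' : ℝ → ℝ)
    (hγ : ∀ r, γ r = if r ≤ R then K₁ * r
      else if r ≤ 2 * R then (-((K₁ + K₂) / R) * (r - R) + K₁) * r
      else -K₂ * r)
    (hγt : ∀ v, γt v = γ v + Kσ * v)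
    (hg : ∀ s, g s = s * Real.exp ((1 / (2 * β ^ 2)) * ∫ v in (0 : ℝ)..s, γt v))
    (hδ : δ = ∫ s in Ioi (0 : ℝ), g s)
    (hf' : ∀ r, f' r = Real.exp (-(1 / (2 * β ^ 2)) * ∫ v in (0 : ℝ)..r, γt v) *
      ∫ s in Ioi r, g s) :
    (∃ f'' : ℝ → ℝ,
      (∀ r : ℝ, 0 ≤ r → HasDerivAt f' (f'' r) r) ∧
      (∀ r : ℝ, 0 ≤ r → f'' r ≤ 0)) ∧
    AntitoneOn f' (Ici (0 : ℝ)) ∧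
    (∀ r : ℝ, 0 ≤ r → 0 ≤ f' r ∧ f' r ≤ f' 0) ∧
    f' 0 = δ ∧
    IsGreatest (f' '' Ici (0 : ℝ)) δ := by
  set c := 1 / (2 * β ^ 2)
  set k := fun v => driftSlope K₁ K₂ R v + Kσ
  have hγt_eq : γt = fun v => v * k v := funext fun v => by
    rw [hγt, hγ, ite_eq_mul_driftSlope (by linarith) hR]; ring
  subst hγt_eq
  set Γ := fun r => ∫ v in (0 : ℝ)..r, v * k v
  have hΓ : ∀ x, HasDerivAt Γ (x * k x) x := fun x =>
    ((continuous_id.mul (continuous_driftSlope.add continuous_const)).integral_hasStrictDerivAt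
      0 x).hasDerivAt
  have hk : Antitone k := (antitone_driftSlope (by linarith) hR).add_const Kσ
  have hk₀ : k (2 * R) < 0 := by simp only [k, driftSlope_two_mul hR]; linarith
  have hc : 0 < c := by positivity
  have hf'_eq : f' = weightedTail c Γ := funext fun r => by simp only [hf', hg, weightedTail, Γ, c]
  have h₀ : f' 0 = δ := by simp [hf'_eq, weightedTail, hδ, hg, Γ]
  subst hf'_eq
  have hanti := antitoneOn_weightedTail hc hΓ hk hk₀
  refine ⟨⟨_, fun r _ => hasDerivAt_weightedTail_of_antitone hc hΓ hk hk₀ r,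
    fun r hr => neg_mul_mul_weightedTail_sub_nonpos hc hΓ hk hr⟩, hanti,
    fun r hr => ⟨weightedTail_nonneg hr, hanti self_mem_Ici hr hr⟩, h₀,
    ⟨0, self_mem_Ici, h₀⟩, ?_⟩
  rintro _ ⟨r, hr, rfl⟩
  exact h₀ ▸ hanti self_mem_Ici hr hr

/-- `f″(r) ≤ 0` for every `r ≥ 0`; consequently `f′` is nonincreasing on `[0,∞)`
and `0 ≤ f′(r) ≤ f′(0) = δ` for every `r ≥ 0`, i.e. the supremum of `f′` on `[0,∞)` equals `δ`
(and it is attained at `0`). -/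
theorem stmt3 (β K₁ Kσ K₂ R : ℝ) (hβ : β ≠ 0) (hK₁ : 0 ≤ K₁) (hKσ : 0 < Kσ)
    (hK₂ : Kσ < K₂) (hR : 0 < R)
    (γ γt g : ℝ → ℝ) (δ : ℝ) (f f' : ℝ → ℝ)
    (hγ : ∀ r, γ r = if r ≤ R then K₁ * r
      else if r ≤ 2 * R then (-((K₁ + K₂) / R) * (r - R) + K₁) * r
      else -K₂ * r)
    (hγt : ∀ v, γt v = γ v + Kσ * v)
    (hg : ∀ s, g s = s * Real.exp ((1 / (2 * β ^ 2)) * ∫ v in (0 : ℝ)..s, γt v))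
    (hδ : δ = ∫ s in Ioi (0 : ℝ), g s)
    (hf : ∀ r, f r = ∫ u in (0 : ℝ)..r,
      Real.exp (-(1 / (2 * β ^ 2)) * ∫ v in (0 : ℝ)..u, γt v) * ∫ s in Ioi u, g s)
    (hf' : ∀ r, f' r = Real.exp (-(1 / (2 * β ^ 2)) * ∫ v in (0 : ℝ)..r, γt v) *
      ∫ s in Ioi r, g s) :
    (∃ f'' : ℝ → ℝ,
      (∀ r : ℝ, 0 ≤ r → HasDerivAt f' (f'' r) r) ∧
      (∀ r : ℝ, 0 ≤ r → f'' r ≤ 0)) ∧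
    AntitoneOn f' (Ici (0 : ℝ)) ∧
    (∀ r : ℝ, 0 ≤ r → 0 ≤ f' r ∧ f' r ≤ f' 0) ∧
    f' 0 = δ ∧
    IsGreatest (f' '' Ici (0 : ℝ)) δ :=
  stmt3_general β K₁ Kσ K₂ R hβ hK₁ hKσ hK₂ hR γ γt g δ f' hγ hγt hg hδ hf'
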